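/- Suppose n is even. Let M be a matching of maximum weight among all matchings of size n/3 in G, and let N be a matching of maximum weight among all matchings of size n/2 in G. Then w(N) ≥ w(M) − w(M_1) − w(M_2) + w(X_1) + Σ_{xyz ∈ P*_2} max{w(xy), w(yz)} + w(X_3) + w(X_4) + w(X_6). -/

import Mathlib

/-!
Remove `M_1 ∪ M_2` from `M` and add one edge from every 3-path of
`P*_1 ∪ P*_2 ∪ P*_3 ∪ P*_4 ∪ P*_6`: its heavier edge or, for `P*_6`, its edge with an endpoint
outside `V(M)` (this is `X_6`). The added edges lie on vertex-disjoint 3-paths and each has an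
endpoint outside `V(M)`, so an edge `f ∈ M` meeting one meets it in a middle edge `g`. If `g` lies
on a path of `P*_6` then `f ∈ M_1`; otherwise `g` lies on a path of `P*_2 ∪ P*_3 ∪ P*_4`, and if
`f ∉ M_1` every middle edge met by `f` lies on such a path too: it cannot lie on a path
`q ∈ P*_5`, because then `f` would be the `M`-edge of `q` and `q` would meet the path of `g`.
Hence `f ∈ M_1 ∪ M_2`, and the result is a matching, of weight
`w(M) - w(M_1) - w(M_2) + w(X_1) + Σ_{P*_2} max + w(X_3) + w(X_4) + w(X_6)`.
Since weights are nonnegative, it extends to a matching of size `n/2`, whose weight is at most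
`w(N)`.
-/

open Finset
open scoped Classical

namespace MW3PP

/-- A 3-path `xyz`: a path on three distinct vertices with middle vertex `y`. -/
structure P3 (V : Type*) where
  x : V
  y : V
  z : V
  hxy : x ≠ y
  hyz : y ≠ z
  hxz : x ≠ z

variable {V : Type*} [Fintype V] [DecidableEq V]

/-- The vertex set of a 3-path. -/
def P3.verts (p : P3 V) : Finset V := {p.x, p.y, p.z}

/-- The two edges of a 3-path. -/
def P3.edges (p : P3 V) : Finset (Sym2 V) := {s(p.x, p.y), s(p.y, p.z)}

/-- The weight of a 3-path. -/
def P3.wt (w : Sym2 V → ℝ) (p : P3 V) : ℝ := w s(p.x, p.y) + w s(p.y, p.z)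

/-- The total weight of a set of edges. -/
def ew (w : Sym2 V → ℝ) (F : Finset (Sym2 V)) : ℝ := ∑ e ∈ F, w e

/-- The total weight of a set of 3-paths. -/
def pw (w : Sym2 V → ℝ) (P : Finset (P3 V)) : ℝ := ∑ p ∈ P, p.wt w

/-- `∑_{xyz ∈ S} max (w (xy)) (w (yz))`. -/
def maxSum (w : Sym2 V → ℝ) (S : Finset (P3 V)) : ℝ :=
  ∑ p ∈ S, max (w s(p.x, p.y)) (w s(p.y, p.z))

/-- A perfect 3-path packing: `n/3` pairwise vertex-disjoint 3-paths covering all vertices. -/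
def IsPacking (P : Finset (P3 V)) : Prop :=
  P.card = Fintype.card V / 3 ∧
  (∀ p ∈ P, ∀ q ∈ P, p ≠ q → Disjoint p.verts q.verts) ∧
  (∀ v : V, ∃ p ∈ P, v ∈ p.verts)

/-- A maximum-weight perfect 3-path packing. -/
def IsMaxPacking (w : Sym2 V → ℝ) (P : Finset (P3 V)) : Prop :=
  IsPacking P ∧ ∀ Q : Finset (P3 V), IsPacking Q → pw w Q ≤ pw w P

/-- A matching: a set of pairwise vertex-disjoint (non-loop) edges. -/
def IsMatching (M : Finset (Sym2 V)) : Prop :=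
  (∀ e ∈ M, ¬ e.IsDiag) ∧
  ∀ e ∈ M, ∀ f ∈ M, e ≠ f → ∀ v : V, v ∈ e → v ∉ f

/-- A maximum-weight matching among all matchings of size `k`. -/
def IsMaxMatchingOfSize (w : Sym2 V → ℝ) (k : ℕ) (M : Finset (Sym2 V)) : Prop :=
  IsMatching M ∧ M.card = k ∧
  ∀ M' : Finset (Sym2 V), IsMatching M' → M'.card = k → ew w M' ≤ ew w M

/-- `v ∈ V(M)` : vertex `v` is covered by the matching `M`. -/
def covered (M : Finset (Sym2 V)) (v : V) : Prop := ∃ e ∈ M, v ∈ e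

/-- `e_u` : the edge of `M` containing `u` (junk value if there is none). -/
noncomputable def eMatch (M : Finset (Sym2 V)) (u : V) : Sym2 V :=
  if h : ∃ e ∈ M, u ∈ e then h.choose else s(u, u)

/-- The cost `c` of an edge with respect to a matching `M`:
`c(uv) = w(uv) - min (w (e_u)) (w (e_v))` if both endpoints are covered by `M`,
and `c(uv) = w(uv)` otherwise. -/
noncomputable def cost (w : Sym2 V → ℝ) (M : Finset (Sym2 V)) : Sym2 V → ℝ :=
  Sym2.lift ⟨fun u v =>
    if covered M u ∧ covered M v then
      w s(u, v) - min (w (eMatch M u)) (w (eMatch M v))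
    else w s(u, v), by
      intro u v
      dsimp only
      by_cases h : covered M u ∧ covered M v
      · rw [if_pos h, if_pos (show covered M v ∧ covered M u from ⟨h.2, h.1⟩),
          Sym2.eq_swap, min_comm]
      · rw [if_neg h, if_neg (show ¬(covered M v ∧ covered M u) from fun h' => h ⟨h'.2, h'.1⟩),
          Sym2.eq_swap]⟩

/-- The total cost of a set of edges. -/
noncomputable def cw (w : Sym2 V → ℝ) (M F : Finset (Sym2 V)) : ℝ := ∑ e ∈ F, cost w M e

/-- The number of vertices of the 3-path `p` covered by `M`. -/
noncomputable def kcnt (M : Finset (Sym2 V)) (p : P3 V) : ℕ :=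
  (p.verts.filter fun v => covered M v).card

/-- Exactly one of the two edges of `p` lies in `M`. -/
def exOne (M : Finset (Sym2 V)) (p : P3 V) : Prop :=
  (s(p.x, p.y) ∈ M ∧ s(p.y, p.z) ∉ M) ∨ (s(p.x, p.y) ∉ M ∧ s(p.y, p.z) ∈ M)

def cls1 (M : Finset (Sym2 V)) (p : P3 V) : Prop := kcnt M p = 0
def cls2 (M : Finset (Sym2 V)) (p : P3 V) : Prop := kcnt M p = 1 ∧ ¬ covered M p.y
def cls3 (M : Finset (Sym2 V)) (p : P3 V) : Prop := kcnt M p = 1 ∧ covered M p.y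
def cls4 (M : Finset (Sym2 V)) (p : P3 V) : Prop := kcnt M p = 2 ∧ ¬ covered M p.y
def cls5 (M : Finset (Sym2 V)) (p : P3 V) : Prop := kcnt M p = 2 ∧ covered M p.y ∧ exOne M p
def cls6 (M : Finset (Sym2 V)) (p : P3 V) : Prop :=
  kcnt M p = 2 ∧ covered M p.y ∧ s(p.x, p.y) ∉ M ∧ s(p.y, p.z) ∉ M
def cls7 (M : Finset (Sym2 V)) (p : P3 V) : Prop := kcnt M p = 3 ∧ exOne M p
def cls8 (M : Finset (Sym2 V)) (p : P3 V) : Prop :=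
  kcnt M p = 3 ∧ s(p.x, p.y) ∉ M ∧ s(p.y, p.z) ∉ M

/-- The subset of a set of 3-paths satisfying a predicate. -/
noncomputable def psel (P : Finset (P3 V)) (c : P3 V → Prop) : Finset (P3 V) := P.filter c

/-- The set of all edges of the 3-paths in `S`. -/
def Esub (S : Finset (P3 V)) : Finset (Sym2 V) := S.biUnion P3.edges

/-- The heaviest edge of a 3-path (the edge `xy` in case of a tie). -/
noncomputable def heavy (w : Sym2 V → ℝ) (p : P3 V) : Sym2 V :=
  if w s(p.y, p.z) ≤ w s(p.x, p.y) then s(p.x, p.y) else s(p.y, p.z)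

noncomputable def X1 (w : Sym2 V → ℝ) (P : Finset (P3 V)) (M : Finset (Sym2 V)) :
    Finset (Sym2 V) := (psel P (cls1 M)).image (heavy w)
noncomputable def X2 (P : Finset (P3 V)) (M : Finset (Sym2 V)) : Finset (Sym2 V) :=
  (psel P (cls2 M)).image fun p => if covered M p.x then s(p.x, p.y) else s(p.y, p.z)
noncomputable def X3 (w : Sym2 V → ℝ) (P : Finset (P3 V)) (M : Finset (Sym2 V)) :
    Finset (Sym2 V) := (psel P (cls3 M)).image (heavy w)
noncomputable def X4 (w : Sym2 V → ℝ) (P : Finset (P3 V)) (M : Finset (Sym2 V)) :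
    Finset (Sym2 V) := (psel P (cls4 M)).image (heavy w)
noncomputable def X5 (P : Finset (P3 V)) (M : Finset (Sym2 V)) : Finset (Sym2 V) :=
  (psel P (cls5 M)).image fun p => if s(p.x, p.y) ∈ M then s(p.y, p.z) else s(p.x, p.y)
noncomputable def X6 (P : Finset (P3 V)) (M : Finset (Sym2 V)) : Finset (Sym2 V) :=
  (psel P (cls6 M)).image fun p => if covered M p.x then s(p.y, p.z) else s(p.x, p.y)
noncomputable def X7 (P : Finset (P3 V)) (M : Finset (Sym2 V)) : Finset (Sym2 V) :=
  (psel P (cls7 M)).image fun p => if s(p.x, p.y) ∈ M then s(p.y, p.z) else s(p.x, p.y)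
noncomputable def X8 (w : Sym2 V → ℝ) (P : Finset (P3 V)) (M : Finset (Sym2 V)) :
    Finset (Sym2 V) := (psel P (cls8 M)).image (heavy w)

noncomputable def Y1 (w : Sym2 V → ℝ) (P : Finset (P3 V)) (M : Finset (Sym2 V)) :
    Finset (Sym2 V) := Esub (psel P (cls1 M)) \ X1 w P M
noncomputable def Y2 (P : Finset (P3 V)) (M : Finset (Sym2 V)) : Finset (Sym2 V) :=
  Esub (psel P (cls2 M)) \ X2 P M
noncomputable def Y3 (w : Sym2 V → ℝ) (P : Finset (P3 V)) (M : Finset (Sym2 V)) :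
    Finset (Sym2 V) := Esub (psel P (cls3 M)) \ X3 w P M
noncomputable def Y4 (w : Sym2 V → ℝ) (P : Finset (P3 V)) (M : Finset (Sym2 V)) :
    Finset (Sym2 V) := Esub (psel P (cls4 M)) \ X4 w P M
noncomputable def Y5 (P : Finset (P3 V)) (M : Finset (Sym2 V)) : Finset (Sym2 V) :=
  Esub (psel P (cls5 M)) \ X5 P M
noncomputable def Y6 (P : Finset (P3 V)) (M : Finset (Sym2 V)) : Finset (Sym2 V) :=
  Esub (psel P (cls6 M)) \ X6 P M
noncomputable def Y7 (P : Finset (P3 V)) (M : Finset (Sym2 V)) : Finset (Sym2 V) :=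
  Esub (psel P (cls7 M)) \ X7 P M
noncomputable def Y8 (w : Sym2 V → ℝ) (P : Finset (P3 V)) (M : Finset (Sym2 V)) :
    Finset (Sym2 V) := Esub (psel P (cls8 M)) \ X8 w P M

/-- An edge is a middle edge (w.r.t. `M`) if exactly one of its endpoints lies in `V(M)`. -/
def isMiddle (M : Finset (Sym2 V)) (e : Sym2 V) : Prop :=
  ∃ u v : V, e = s(u, v) ∧ covered M u ∧ ¬ covered M v

/-- Two edges share a vertex. -/
def shares (e f : Sym2 V) : Prop := ∃ v, v ∈ e ∧ v ∈ f

/-- `g` is a middle edge of some 3-path in `S`. -/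
def middleIn (M : Finset (Sym2 V)) (S : Finset (P3 V)) (g : Sym2 V) : Prop :=
  (∃ p ∈ S, g ∈ p.edges) ∧ isMiddle M g

/-- The 3-paths of `P` lying in classes 2, 3 or 4. -/
noncomputable def P234 (P : Finset (P3 V)) (M : Finset (Sym2 V)) : Finset (P3 V) :=
  psel P fun p => cls2 M p ∨ cls3 M p ∨ cls4 M p

/-- `M_1`: edges of `M` sharing a vertex with at least one middle edge of a 3-path of `P*_6`. -/
noncomputable def Mset1 (P : Finset (P3 V)) (M : Finset (Sym2 V)) : Finset (Sym2 V) :=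
  M.filter fun f => ∃ g, middleIn M (psel P (cls6 M)) g ∧ shares f g

/-- `M_2`: edges of `M` sharing a vertex with at least one middle edge, all middle edges met
belonging to 3-paths of `P*_2 ∪ P*_3 ∪ P*_4`. -/
noncomputable def Mset2 (P : Finset (P3 V)) (M : Finset (Sym2 V)) : Finset (Sym2 V) :=
  M.filter fun f =>
    (∃ g, middleIn M P g ∧ shares f g) ∧
    ∀ g, middleIn M P g → shares f g → middleIn M (P234 P M) g

/-- `M_3 = M ∩ E(P*_7)`. -/
noncomputable def Mset3 (P : Finset (P3 V)) (M : Finset (Sym2 V)) : Finset (Sym2 V) :=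
  M ∩ Esub (psel P (cls7 M))

/-- `M_4 = M ∩ E(P*_5)`. -/
noncomputable def Mset4 (P : Finset (P3 V)) (M : Finset (Sym2 V)) : Finset (Sym2 V) :=
  M ∩ Esub (psel P (cls5 M))

/-- The middle edges of 3-paths of `P*_6`. -/
noncomputable def mid6 (P : Finset (P3 V)) (M : Finset (Sym2 V)) : Finset (Sym2 V) :=
  (Esub (psel P (cls6 M))).filter (isMiddle M)

/-- `M'_1`: edges of `M_1` meeting exactly one middle edge of a 3-path of `P*_6` and
no middle edge of a 3-path of `P*_2 ∪ P*_3 ∪ P*_4`. -/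
noncomputable def Mset1' (P : Finset (P3 V)) (M : Finset (Sym2 V)) : Finset (Sym2 V) :=
  (Mset1 P M).filter fun f =>
    ((mid6 P M).filter fun g => shares f g).card = 1 ∧
    ∀ g, middleIn M (P234 P M) g → ¬ shares f g

/-- `M''_1`: edges of `M_1` meeting two middle edges of 3-paths of `P*_6`. -/
noncomputable def Mset1'' (P : Finset (P3 V)) (M : Finset (Sym2 V)) : Finset (Sym2 V) :=
  (Mset1 P M).filter fun f => ((mid6 P M).filter fun g => shares f g).card = 2

/-- `M'''_1`: edges of `M_1` meeting exactly one middle edge of a 3-path of `P*_6` and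
at least one middle edge of a 3-path of `P*_2 ∪ P*_3 ∪ P*_4`. -/
noncomputable def Mset1''' (P : Finset (P3 V)) (M : Finset (Sym2 V)) : Finset (Sym2 V) :=
  (Mset1 P M).filter fun f =>
    ((mid6 P M).filter fun g => shares f g).card = 1 ∧
    ∃ g, middleIn M (P234 P M) g ∧ shares f g

/-- Assumption on `P*`: for every 3-path `xyz ∈ P*` with `y ∉ V(M)` and `x, z ∈ V(M)`,
the vertices `x` and `z` lie in two distinct edges of `M`. -/
def Ass (P : Finset (P3 V)) (M : Finset (Sym2 V)) : Prop :=
  ∀ p ∈ P, ¬ covered M p.y → covered M p.x → covered M p.z →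
    ∃ e ∈ M, ∃ f ∈ M, p.x ∈ e ∧ p.z ∈ f ∧ e ≠ f

/-- An admissible edge w.r.t. `M`: either both endpoints are in `V(M)` and lie in two distinct
edges of `M`, or exactly one endpoint is in `V(M)`. -/
def goodEdge (M : Finset (Sym2 V)) (e : Sym2 V) : Prop :=
  (∃ u v : V, e = s(u, v) ∧ covered M u ∧ covered M v ∧ ∀ f ∈ M, ¬(u ∈ f ∧ v ∈ f)) ∨
  (∃ u v : V, e = s(u, v) ∧ covered M u ∧ ¬ covered M v)

section Matching

variable {α : Type*} {M A B : Finset (Sym2 α)}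

theorem shares_self (e : Sym2 α) : shares e e := ⟨e.out.1, e.out_fst_mem, e.out_fst_mem⟩

theorem IsMatching.eq_of_mem_of_mem (hM : IsMatching M) {e f : Sym2 α} (he : e ∈ M) (hf : f ∈ M)
    {v : α} (hve : v ∈ e) (hvf : v ∈ f) : e = f := by
  by_contra h
  exact hM.2 e he f hf h v hve hvf

theorem IsMatching.mono (hM : IsMatching M) (hAM : A ⊆ M) : IsMatching A :=
  ⟨fun e he => hM.1 e (hAM he), fun e he f hf => hM.2 e (hAM he) f (hAM hf)⟩

theorem IsMatching.union [DecidableEq α] (hA : IsMatching A) (hB : IsMatching B)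
    (hAB : ∀ e ∈ A, ∀ f ∈ B, ¬ shares e f) : IsMatching (A ∪ B) := by
  refine ⟨fun e he => (Finset.mem_union.1 he).elim (hA.1 e) (hB.1 e), ?_⟩
  intro e he f hf hef v hve hvf
  rcases Finset.mem_union.1 he with he | he <;> rcases Finset.mem_union.1 hf with hf | hf
  · exact hA.2 e he f hf hef v hve hvf
  · exact hAB e he f hf ⟨v, hve, hvf⟩
  · exact hAB f hf e he ⟨v, hvf, hve⟩
  · exact hB.2 e he f hf hef v hve hvf

theorem IsMatching.eq_of_shares_isMiddle (hM : IsMatching M) {e f g : Sym2 α} (he : e ∈ M)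
    (hf : f ∈ M) (hg : isMiddle M g) (heg : shares e g) (hfg : shares f g) : e = f := by
  obtain ⟨u, v, rfl, -, hv⟩ := hg
  have hu : ∀ e ∈ M, shares e s(u, v) → u ∈ e := by
    rintro e he ⟨a, hae, hauv⟩
    rcases Sym2.mem_iff.1 hauv with rfl | rfl
    · exact hae
    · exact absurd ⟨e, he, hae⟩ hv
  exact hM.eq_of_mem_of_mem he hf (hu e he heg) (hu f hf hfg)

theorem isMiddle_of_shares {f g : Sym2 α} (hf : f ∈ M) (hfg : shares f g)
    (hg : ∃ v ∈ g, ¬ covered M v) : isMiddle M g := by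
  obtain ⟨u, huf, hug⟩ := hfg
  obtain ⟨v, hvg, hv⟩ := hg
  have hu : covered M u := ⟨f, hf, huf⟩
  have huv : u ≠ v := by rintro rfl; exact hv hu
  exact ⟨u, v, ((Sym2.mem_and_mem_iff huv).1 ⟨hug, hvg⟩), hu, hv⟩

theorem IsMatching.card_biUnion_toFinset [DecidableEq α] (hM : IsMatching M) :
    #(M.biUnion Sym2.toFinset) = 2 * #M := by
  rw [Finset.card_biUnion, Finset.sum_congr rfl fun e he =>
    Sym2.card_toFinset_of_not_isDiag e (hM.1 e he), Finset.sum_const, smul_eq_mul, mul_comm]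
  intro e he f hf hef
  simp only [Function.onFun, Finset.disjoint_left, Sym2.mem_toFinset]
  exact hM.2 e he f hf hef

theorem IsMatching.two_mul_card_le [DecidableEq α] [Fintype α] (hM : IsMatching M) :
    2 * #M ≤ Fintype.card α :=
  hM.card_biUnion_toFinset ▸ Finset.card_le_univ _

theorem IsMatching.insert_mk [DecidableEq α] (hM : IsMatching M) {u v : α} (huv : u ≠ v)
    (hu : ¬ covered M u) (hv : ¬ covered M v) : IsMatching (insert s(u, v) M) := by
  rw [Finset.insert_eq]
  refine IsMatching.union ⟨?_, ?_⟩ hM ?_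
  · simpa using huv
  · simp
  · rintro e he f hf ⟨a, hae, haf⟩
    rw [Finset.mem_singleton.1 he, Sym2.mem_iff] at hae
    rcases hae with rfl | rfl
    exacts [hu ⟨f, hf, haf⟩, hv ⟨f, hf, haf⟩]

theorem IsMatching.exists_superset_card_eq [DecidableEq α] [Fintype α] (hA : IsMatching A)
    {k : ℕ} (hAk : #A ≤ k) (hk : k ≤ Fintype.card α / 2) :
    ∃ B, IsMatching B ∧ A ⊆ B ∧ #B = k := by
  induction k, hAk using Nat.le_induction with
  | base => exact ⟨A, hA, subset_rfl, rfl⟩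
  | succ k _ ih =>
    obtain ⟨B, hB, hAB, hBk⟩ := ih (by omega)
    have huncov : 1 < #(B.biUnion Sym2.toFinset)ᶜ := by
      rw [Finset.card_compl, hB.card_biUnion_toFinset]
      omega
    obtain ⟨u, hu, v, hv, huv⟩ := Finset.one_lt_card.1 huncov
    have hcov : ∀ x, x ∈ (B.biUnion Sym2.toFinset)ᶜ → ¬ covered B x := by
      simp [covered]
    have huB : s(u, v) ∉ B := fun h => hcov u hu ⟨_, h, Sym2.mem_mk_left u v⟩
    refine ⟨insert s(u, v) B, hB.insert_mk huv (hcov u hu) (hcov v hv),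
      hAB.trans (Finset.subset_insert _ _), ?_⟩
    rw [Finset.card_insert_of_notMem huB, hBk]

theorem ew_eq_sdiff_union_add [DecidableEq α] (w : Sym2 α → ℝ) {S T : Finset (Sym2 α)}
    (hS : S ⊆ M) (hT : T ⊆ M) (hST : Disjoint S T) :
    ew w M = ew w (M \ (S ∪ T)) + ew w S + ew w T := by
  rw [ew, ew, ew, ew, add_assoc, ← Finset.sum_union hST,
    Finset.sum_sdiff (Finset.union_subset hS hT)]

end Matching

section Paths

variable {α : Type*} {P : Finset (P3 α)} {p q : P3 α} {e : Sym2 α}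

theorem mem_psel {c : P3 α → Prop} : p ∈ psel P c ↔ p ∈ P ∧ c p := by
  simp [psel]

theorem sum_psel_or {c d : P3 α → Prop} (h : ∀ p, c p → ¬ d p) (f : P3 α → ℝ) :
    ∑ p ∈ psel P (fun p => c p ∨ d p), f p = ∑ p ∈ psel P c, f p + ∑ p ∈ psel P d, f p := by
  rw [← Finset.sum_union (Finset.disjoint_left.2 fun p hc hd =>
    h p (mem_psel.1 hc).2 (mem_psel.1 hd).2)]
  congr 1
  ext p
  simp only [mem_psel, Finset.mem_union]
  tauto

theorem weight_heavy (w : Sym2 α → ℝ) (p : P3 α) :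
    w (heavy w p) = max (w s(p.x, p.y)) (w s(p.y, p.z)) := by
  rw [heavy, apply_ite w, max_comm, max_def]

variable [DecidableEq α]

theorem P3.mem_edges : e ∈ p.edges ↔ e = s(p.x, p.y) ∨ e = s(p.y, p.z) := by
  simp [P3.edges]

theorem P3.y_mem_of_mem_edges (he : e ∈ p.edges) : p.y ∈ e := by
  rcases P3.mem_edges.1 he with rfl | rfl <;> simp

theorem P3.not_isDiag_of_mem_edges (he : e ∈ p.edges) : ¬ e.IsDiag := by
  rcases P3.mem_edges.1 he with rfl | rfl <;> simp [p.hxy, p.hyz]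

theorem P3.mem_verts_of_mem_edges (he : e ∈ p.edges) {v : α} (hv : v ∈ e) :
    v ∈ p.verts := by
  rcases P3.mem_edges.1 he with rfl | rfl <;> rcases Sym2.mem_iff.1 hv with rfl | rfl <;>
    simp [P3.verts]

theorem heavy_mem_edges (w : Sym2 α → ℝ) (p : P3 α) : heavy w p ∈ p.edges := by
  unfold heavy; split_ifs <;> simp [P3.edges]

variable [Fintype α]

theorem IsPacking.eq_of_mem_verts (hP : IsPacking P) (hp : p ∈ P) (hq : q ∈ P) {v : α}
    (hvp : v ∈ p.verts) (hvq : v ∈ q.verts) : p = q := by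
  by_contra hpq
  exact Finset.disjoint_left.1 (hP.2.1 p hp q hq hpq) hvp hvq

theorem IsPacking.eq_of_mem_edges (hP : IsPacking P) (hp : p ∈ P) (hq : q ∈ P)
    (hep : e ∈ p.edges) (heq : e ∈ q.edges) : p = q :=
  hP.eq_of_mem_verts hp hq (P3.mem_verts_of_mem_edges hep (P3.y_mem_of_mem_edges hep))
    (P3.mem_verts_of_mem_edges heq (P3.y_mem_of_mem_edges hep))

theorem IsPacking.ew_image (hP : IsPacking P) {S : Finset (P3 α)} (hS : S ⊆ P)
    {f : P3 α → Sym2 α} (hf : ∀ p, f p ∈ p.edges) (w : Sym2 α → ℝ) :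
    ew w (S.image f) = ∑ p ∈ S, w (f p) :=
  Finset.sum_image fun p hp q hq hpq => hP.eq_of_mem_edges (hS hp) (hS hq) (hf p) (hpq ▸ hf q)

end Paths

section Classes

variable {α : Type*} [DecidableEq α] {M : Finset (Sym2 α)} {p : P3 α} {g : Sym2 α}

theorem kcnt_eq (M : Finset (Sym2 α)) (p : P3 α) :
    kcnt M p = (if covered M p.x then 1 else 0) + (if covered M p.y then 1 else 0) +
      (if covered M p.z then 1 else 0) := by
  rw [kcnt, Finset.card_filter, P3.verts, Finset.sum_insert (by simp [p.hxy, p.hxz]),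
    Finset.sum_insert (by simp [p.hyz]), Finset.sum_singleton, add_assoc]

theorem cls_of_isMiddle (hg : g ∈ p.edges) (hgm : isMiddle M g) :
    (cls2 M p ∨ cls3 M p ∨ cls4 M p) ∨ cls5 M p ∨ cls6 M p := by
  have hxy : s(p.x, p.y) ∈ M → covered M p.x := fun h => ⟨_, h, by simp⟩
  have hyz : s(p.y, p.z) ∈ M → covered M p.z := fun h => ⟨_, h, by simp⟩
  obtain ⟨u, v, rfl, hu, hv⟩ := hgm
  simp only [cls2, cls3, cls4, cls5, cls6, exOne, kcnt_eq]
  rcases P3.mem_edges.1 hg with h | h <;> rcases Sym2.eq_iff.1 h with ⟨rfl, rfl⟩ | ⟨rfl, rfl⟩ <;>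
    grind

/-- `P*_1 ∪ P*_2 ∪ P*_3 ∪ P*_4 ∪ P*_6`: the 3-paths that give an edge to the new matching. -/
def selClass (M : Finset (Sym2 α)) (p : P3 α) : Prop :=
  cls1 M p ∨ cls2 M p ∨ cls3 M p ∨ cls4 M p ∨ cls6 M p

noncomputable def selEdge (w : Sym2 α → ℝ) (M : Finset (Sym2 α)) (p : P3 α) : Sym2 α :=
  if cls6 M p then (if covered M p.x then s(p.y, p.z) else s(p.x, p.y)) else heavy w p

theorem selEdge_mem_edges (w : Sym2 α → ℝ) (M : Finset (Sym2 α)) (p : P3 α) :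
    selEdge w M p ∈ p.edges := by
  unfold selEdge
  split_ifs
  · simp [P3.edges]
  · simp [P3.edges]
  · exact heavy_mem_edges w p

theorem selEdge_of_not_cls6 (w : Sym2 α → ℝ) (h : ¬ cls6 M p) : selEdge w M p = heavy w p :=
  if_neg h

theorem exists_not_covered_mem_selEdge (w : Sym2 α → ℝ) (h : selClass M p) :
    ∃ v ∈ selEdge w M p, ¬ covered M v := by
  simp only [selClass, cls1, cls2, cls3, cls4, cls6, kcnt_eq] at h
  unfold selEdge heavy cls6
  simp only [kcnt_eq]
  split_ifs <;> simp only [Sym2.mem_iff, exists_eq_or_imp, exists_eq_left] <;> grind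

theorem not_cls5_of_selClass (h : selClass M p) : ¬ cls5 M p := by
  simp only [selClass, cls1, cls2, cls3, cls4, cls5, cls6, exOne] at h ⊢
  grind

theorem mem_edges_of_cls5 (hM : IsMatching M) (h5 : cls5 M p) (hg : g ∈ p.edges)
    (hgm : isMiddle M g) {f : Sym2 α} (hf : f ∈ M) (hfg : shares f g) : f ∈ p.edges := by
  obtain ⟨e, hep, heM⟩ : ∃ e ∈ p.edges, e ∈ M := by
    rcases h5.2.2 with ⟨h, -⟩ | ⟨-, h⟩
    exacts [⟨_, by simp [P3.edges], h⟩, ⟨_, by simp [P3.edges], h⟩]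
  obtain rfl := hM.eq_of_shares_isMiddle heM hf hgm
    ⟨p.y, P3.y_mem_of_mem_edges hep, P3.y_mem_of_mem_edges hg⟩ hfg
  exact hep

end Classes

section Construction

variable {α : Type*} [DecidableEq α] [Fintype α] {M : Finset (Sym2 α)} {P : Finset (P3 α)}
  {p : P3 α} {f g : Sym2 α} (w : Sym2 α → ℝ)

theorem disjoint_Mset1_Mset2 (hP : IsPacking P) : Disjoint (Mset1 P M) (Mset2 P M) := by
  refine Finset.disjoint_left.2 fun f hf1 hf2 => ?_
  obtain ⟨-, g, ⟨⟨p, hp6, hgp⟩, hgm⟩, hfg⟩ := Finset.mem_filter.1 hf1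
  obtain ⟨hp, h6⟩ := mem_psel.1 hp6
  obtain ⟨⟨q, hq234, hgq⟩, -⟩ := (Finset.mem_filter.1 hf2).2.2 g ⟨⟨p, hp, hgp⟩, hgm⟩ hfg
  obtain ⟨hq, h234⟩ := mem_psel.1 hq234
  obtain rfl := hP.eq_of_mem_edges hp hq hgp hgq
  simp only [cls2, cls3, cls4, cls6] at h6 h234
  grind

theorem mem_Mset1_union_Mset2 (hP : IsPacking P) (hM : IsMatching M) (hp : p ∈ P)
    (h234 : cls2 M p ∨ cls3 M p ∨ cls4 M p) (hg : g ∈ p.edges) (hgm : isMiddle M g)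
    (hf : f ∈ M) (hfg : shares f g) : f ∈ Mset1 P M ∪ Mset2 P M := by
  rw [Finset.mem_union, or_iff_not_imp_left]
  intro hf1
  refine Finset.mem_filter.2 ⟨hf, ⟨g, ⟨⟨p, hp, hg⟩, hgm⟩, hfg⟩, ?_⟩
  rintro g' ⟨⟨q, hq, hg'⟩, hg'm⟩ hfg'
  refine ⟨⟨q, mem_psel.2 ⟨hq, ?_⟩, hg'⟩, hg'm⟩
  rcases cls_of_isMiddle hg' hg'm with h234' | h5 | h6
  · exact h234'
  · -- then `f` is the `M`-edge of `q`, so `q` meets `p` in a vertex of `f`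
    obtain ⟨v, hvf, hvg⟩ := hfg
    obtain rfl : p = q := hP.eq_of_mem_verts hp hq (P3.mem_verts_of_mem_edges hg hvg)
      (P3.mem_verts_of_mem_edges (mem_edges_of_cls5 hM h5 hg' hg'm hf hfg') hvf)
    exact absurd h5 (not_cls5_of_selClass (Or.inr (h234.imp_right (Or.imp_right Or.inl))))
  · exact absurd (Finset.mem_filter.2 ⟨hf, g', ⟨⟨q, mem_psel.2 ⟨hq, h6⟩, hg'⟩, hg'm⟩, hfg'⟩) hf1

theorem mem_Mset1_union_Mset2_of_shares_selEdge (hP : IsPacking P) (hM : IsMatching M)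
    (hp : p ∈ P) (hc : selClass M p) (hf : f ∈ M) (hfs : shares f (selEdge w M p)) :
    f ∈ Mset1 P M ∪ Mset2 P M := by
  have hg := selEdge_mem_edges w M p
  have hgm := isMiddle_of_shares hf hfs (exists_not_covered_mem_selEdge w hc)
  rcases cls_of_isMiddle hg hgm with h234 | h5 | h6
  · exact mem_Mset1_union_Mset2 hP hM hp h234 hg hgm hf hfs
  · exact absurd h5 (not_cls5_of_selClass hc)
  · exact Finset.mem_union_left _
      (Finset.mem_filter.2 ⟨hf, _, ⟨⟨p, mem_psel.2 ⟨hp, h6⟩, hg⟩, hgm⟩, hfs⟩)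

noncomputable def selEdges (P : Finset (P3 α)) (M : Finset (Sym2 α)) : Finset (Sym2 α) :=
  (psel P (selClass M)).image (selEdge w M)

theorem isMatching_selEdges (hP : IsPacking P) : IsMatching (selEdges w P M) := by
  refine ⟨fun e he => ?_, fun e he f hf hef v hve hvf => ?_⟩
  · obtain ⟨p, -, rfl⟩ := Finset.mem_image.1 he
    exact P3.not_isDiag_of_mem_edges (selEdge_mem_edges w M p)
  · obtain ⟨p, hp, rfl⟩ := Finset.mem_image.1 he
    obtain ⟨q, hq, rfl⟩ := Finset.mem_image.1 hf
    exact hef (congrArg _ (hP.eq_of_mem_verts (mem_psel.1 hp).1 (mem_psel.1 hq).1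
      (P3.mem_verts_of_mem_edges (selEdge_mem_edges w M p) hve)
      (P3.mem_verts_of_mem_edges (selEdge_mem_edges w M q) hvf)))

theorem not_shares_sdiff_selEdges (hP : IsPacking P) (hM : IsMatching M) :
    ∀ e ∈ M \ (Mset1 P M ∪ Mset2 P M), ∀ f ∈ selEdges w P M, ¬ shares e f := by
  intro e he f hf hef
  obtain ⟨p, hp, rfl⟩ := Finset.mem_image.1 hf
  obtain ⟨hp, hc⟩ := mem_psel.1 hp
  exact (Finset.mem_sdiff.1 he).2
    (mem_Mset1_union_Mset2_of_shares_selEdge w hP hM hp hc (Finset.mem_sdiff.1 he).1 hef)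

theorem ew_selEdges (hP : IsPacking P) :
    ew w (selEdges w P M) = ew w (X1 w P M) + maxSum w (psel P (cls2 M)) + ew w (X3 w P M) +
      ew w (X4 w P M) + ew w (X6 P M) := by
  have hsub : ∀ c, psel P c ⊆ P := fun c => Finset.filter_subset _ _
  have hheavy : ∀ c : P3 α → Prop, (∀ p, c p → ¬ cls6 M p) →
      ∑ p ∈ psel P c, w (selEdge w M p) = ∑ p ∈ psel P c, w (heavy w p) := fun c hc =>
    Finset.sum_congr rfl fun p hp => by rw [selEdge_of_not_cls6 w (hc p (mem_psel.1 hp).2)]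
  have h6 : ∑ p ∈ psel P (cls6 M), w (selEdge w M p) = ew w (X6 P M) := by
    rw [X6, hP.ew_image (hsub _) fun p => by split_ifs <;> simp [P3.edges]]
    exact Finset.sum_congr rfl fun p hp => by rw [selEdge, if_pos (mem_psel.1 hp).2]
  unfold selEdges selClass
  rw [hP.ew_image (hsub _) (selEdge_mem_edges w M)]
  rw [sum_psel_or, sum_psel_or, sum_psel_or, sum_psel_or, h6, hheavy, hheavy, hheavy, hheavy,
    X1, X3, X4, hP.ew_image (hsub _) (heavy_mem_edges w), hP.ew_image (hsub _) (heavy_mem_edges w),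
    hP.ew_image (hsub _) (heavy_mem_edges w), maxSum]
  · simp only [weight_heavy, add_assoc]
  all_goals simp only [cls1, cls2, cls3, cls4, cls6]; grind

end Construction

theorem statement_8_general (n : ℕ) (hn : Fintype.card V = n)
    (w : Sym2 V → ℝ) (hw : ∀ e : Sym2 V, 0 ≤ w e)
    (M : Finset (Sym2 V)) (hM : IsMaxMatchingOfSize w (n / 3) M)
    (N : Finset (Sym2 V)) (hN : IsMaxMatchingOfSize w (n / 2) N)
    (Pstar : Finset (P3 V)) (hP : IsMaxPacking w Pstar) :
    ew w M - ew w (Mset1 Pstar M) - ew w (Mset2 Pstar M) + ew w (X1 w Pstar M) +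
      maxSum w (psel Pstar (cls2 M)) + ew w (X3 w Pstar M) + ew w (X4 w Pstar M) +
      ew w (X6 Pstar M) ≤ ew w N := by
  subst hn
  set R := M \ (Mset1 Pstar M ∪ Mset2 Pstar M)
  have hR : IsMatching (R ∪ selEdges w Pstar M) :=
    (hM.1.mono Finset.sdiff_subset).union (isMatching_selEdges w hP.1)
      (not_shares_sdiff_selEdges w hP.1 hM.1)
  have hdisj : Disjoint R (selEdges w Pstar M) := Finset.disjoint_left.2 fun e he he' =>
    not_shares_sdiff_selEdges w hP.1 hM.1 e he e he' (shares_self e)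
  obtain ⟨B, hB, hRB, hBc⟩ :=
    hR.exists_superset_card_eq (by have := hR.two_mul_card_le; omega) le_rfl
  have hRBw : ew w (R ∪ selEdges w Pstar M) ≤ ew w B :=
    Finset.sum_le_sum_of_subset_of_nonneg hRB fun e _ _ => hw e
  have hBN : ew w B ≤ ew w N := hN.2.2 B hB hBc
  have hRw : ew w (R ∪ selEdges w Pstar M) = ew w R + ew w (selEdges w Pstar M) :=
    Finset.sum_union hdisj
  have hMw := ew_eq_sdiff_union_add w (S := Mset1 Pstar M) (T := Mset2 Pstar M)
    (Finset.filter_subset _ M) (Finset.filter_subset _ M) (disjoint_Mset1_Mset2 hP.1)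
  linarith [ew_selEdges w (M := M) hP.1]

theorem statement_8 (n : ℕ) (hn : Fintype.card V = n) (h3 : 3 ∣ n) (h2 : 2 ∣ n)
    (w : Sym2 V → ℝ) (hw : ∀ e : Sym2 V, 0 ≤ w e)
    (M : Finset (Sym2 V)) (hM : IsMaxMatchingOfSize w (n / 3) M)
    (N : Finset (Sym2 V)) (hN : IsMaxMatchingOfSize w (n / 2) N)
    (Pstar : Finset (P3 V)) (hP : IsMaxPacking w Pstar) (hAss : Ass Pstar M) :
    ew w M - ew w (Mset1 Pstar M) - ew w (Mset2 Pstar M) + ew w (X1 w Pstar M) +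
      maxSum w (psel Pstar (cls2 M)) + ew w (X3 w Pstar M) + ew w (X4 w Pstar M) +
      ew w (X6 Pstar M) ≤ ew w N :=
  statement_8_general n hn w hw M hM N hN Pstar hP

end MW3PP
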